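/- Let n ≥ 1 and let Φ : Matrix (Fin n) ℂ →ₗ[ℂ] Matrix (Fin n) ℂ be a positive trace-preserving linear map. Then Φ is unital (Φ 1 = 1) if and only if for every density matrix ρ, the largest eigenvalue of Φ ρ is at most the largest eigenvalue of ρ; equivalently, Φ does not decrease the entropy N_∞(ρ) = 1 − max_k λ_k(ρ). -/

import Mathlib

open scoped Matrix ComplexOrder

def IsDensityMatrix {n : ℕ} (ρ : Matrix (Fin n) (Fin n) ℂ) : Prop :=
  ρ.PosSemidef ∧ ρ.trace = 1

/-- The (real) eigenvalues of a matrix, via its Hermitian spectral decomposition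
(junk value `0` if the matrix is not Hermitian). -/
noncomputable def eigs {n : ℕ} (A : Matrix (Fin n) (Fin n) ℂ) : Fin n → ℝ :=
  if h : A.IsHermitian then h.eigenvalues else 0

def IsPositiveMap {n : ℕ}
    (Φ : Matrix (Fin n) (Fin n) ℂ →ₗ[ℂ] Matrix (Fin n) (Fin n) ℂ) : Prop :=
  ∀ A : Matrix (Fin n) (Fin n) ℂ, A.PosSemidef → (Φ A).PosSemidef

def IsTracePreserving {n : ℕ}
    (Φ : Matrix (Fin n) (Fin n) ℂ →ₗ[ℂ] Matrix (Fin n) (Fin n) ℂ) : Prop :=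
  ∀ A : Matrix (Fin n) (Fin n) ℂ, (Φ A).trace = A.trace

/-!
If `ρ` has largest eigenvalue `λ` then `ρ ≤ λ • 1` in the Loewner order, and a positive unital
map preserves this inequality, so `Φ ρ ≤ λ • 1`. Conversely, `Φ` sends the maximally mixed state
`n⁻¹ • 1` to a density matrix whose eigenvalues are all at most `n⁻¹`, i.e. to a density matrix
below `n⁻¹ • 1`; two density matrices comparable in the Loewner order coincide (their difference
is positive semidefinite with trace zero), so `Φ` fixes `n⁻¹ • 1` and hence `1`.
-/

open scoped MatrixOrder

namespace Matrix

variable {𝕜 ι : Type*} [RCLike 𝕜] [Fintype ι] [DecidableEq ι]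

lemma IsHermitian.le_smul_one_iff {A : Matrix ι ι 𝕜} (hA : A.IsHermitian) (t : ℝ) :
    A ≤ t • (1 : Matrix ι ι 𝕜) ↔ ∀ i, hA.eigenvalues i ≤ t := by
  rw [← Algebra.algebraMap_eq_smul_one, le_algebraMap_iff_spectrum_le hA.isSelfAdjoint,
    hA.spectrum_real_eq_range_eigenvalues, Set.forall_mem_range]

omit [DecidableEq ι] in
lemma eq_of_le_of_trace_eq {A B : Matrix ι ι 𝕜} (hAB : A ≤ B) (htr : A.trace = B.trace) :
    A = B := by
  have hBA : B - A = 0 := (le_iff.mp hAB).trace_eq_zero_iff.mp (by rw [trace_sub, htr, sub_self])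
  exact (sub_eq_zero.mp hBA).symm

end Matrix

open Matrix

variable {n : ℕ}

lemma eigs_eq_eigenvalues {A : Matrix (Fin n) (Fin n) ℂ} (hA : A.IsHermitian) :
    eigs A = hA.eigenvalues :=
  dif_pos hA

lemma iSup_eigs_le_iff [NeZero n] {A : Matrix (Fin n) (Fin n) ℂ} (hA : A.IsHermitian) (t : ℝ) :
    ⨆ k, eigs A k ≤ t ↔ A ≤ t • 1 := by
  rw [ciSup_le_iff (Set.finite_range _).bddAbove, hA.le_smul_one_iff, eigs_eq_eigenvalues hA]

lemma IsPositiveMap.monotone {Φ : Matrix (Fin n) (Fin n) ℂ →ₗ[ℂ] Matrix (Fin n) (Fin n) ℂ}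
    (hΦ : IsPositiveMap Φ) : Monotone Φ := fun A B hAB => by
  simpa only [le_iff, map_sub] using hΦ _ (le_iff.mp hAB)

lemma IsDensityMatrix.eq_of_le {σ ρ : Matrix (Fin n) (Fin n) ℂ} (hσ : IsDensityMatrix σ)
    (hρ : IsDensityMatrix ρ) (hσρ : σ ≤ ρ) : σ = ρ :=
  eq_of_le_of_trace_eq hσρ (hσ.2.trans hρ.2.symm)

variable (n) in
noncomputable def maximallyMixed : Matrix (Fin n) (Fin n) ℂ := (n : ℝ)⁻¹ • 1

lemma natCast_smul_maximallyMixed [NeZero n] : (n : ℝ) • maximallyMixed n = 1 := by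
  rw [maximallyMixed, smul_smul, mul_inv_cancel₀ (NeZero.ne _), one_smul]

lemma isDensityMatrix_maximallyMixed [NeZero n] : IsDensityMatrix (maximallyMixed n) := by
  refine ⟨PosSemidef.one.smul (by positivity), ?_⟩
  simp [maximallyMixed, NeZero.ne]

theorem unital_iff_max_eigenvalue_nonincreasing_general {n : ℕ}
    (Φ : Matrix (Fin n) (Fin n) ℂ →ₗ[ℂ] Matrix (Fin n) (Fin n) ℂ)
    (hpos : IsPositiveMap Φ) (htp : IsTracePreserving Φ) :
    Φ 1 = 1 ↔
      ∀ ρ : Matrix (Fin n) (Fin n) ℂ, IsDensityMatrix ρ →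
        (⨆ k, eigs (Φ ρ) k) ≤ ⨆ k, eigs ρ k := by
  rcases Nat.eq_zero_or_pos n with rfl | hn
  · exact iff_of_true (Subsingleton.elim _ _) fun ρ _ => by simp
  have : NeZero n := ⟨hn.ne'⟩
  constructor
  · intro hunital ρ hρ
    rw [iSup_eigs_le_iff (hpos ρ hρ.1).isHermitian]
    calc Φ ρ ≤ Φ ((⨆ k, eigs ρ k) • 1) :=
          hpos.monotone ((iSup_eigs_le_iff hρ.1.isHermitian _).mp le_rfl)
      _ = (⨆ k, eigs ρ k) • 1 := by rw [LinearMap.map_smul_of_tower, hunital]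
  · intro hmax
    set ρ₀ := maximallyMixed n
    have hρ₀ : IsDensityMatrix ρ₀ := isDensityMatrix_maximallyMixed
    have hΦρ₀ : IsDensityMatrix (Φ ρ₀) := ⟨hpos _ hρ₀.1, (htp _).trans hρ₀.2⟩
    have hle : Φ ρ₀ ≤ ρ₀ := by
      have hsup := (hmax ρ₀ hρ₀).trans ((iSup_eigs_le_iff hρ₀.1.isHermitian _).mpr le_rfl)
      exact (iSup_eigs_le_iff hΦρ₀.1.isHermitian _).mp hsup
    rw [← natCast_smul_maximallyMixed, LinearMap.map_smul_of_tower, hΦρ₀.eq_of_le hρ₀ hle]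

/-- A positive trace-preserving linear map `Φ` is unital iff for every
density matrix `ρ` the largest eigenvalue of `Φ ρ` is at most the largest eigenvalue
of `ρ` (equivalently, `Φ` does not decrease `N_∞(ρ) = 1 - max_k λ_k(ρ)`). -/
theorem unital_iff_max_eigenvalue_nonincreasing {n : ℕ} (hn : 1 ≤ n)
    (Φ : Matrix (Fin n) (Fin n) ℂ →ₗ[ℂ] Matrix (Fin n) (Fin n) ℂ)
    (hpos : IsPositiveMap Φ) (htp : IsTracePreserving Φ) :
    Φ 1 = 1 ↔
      ∀ ρ : Matrix (Fin n) (Fin n) ℂ, IsDensityMatrix ρ →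
        (⨆ k, eigs (Φ ρ) k) ≤ ⨆ k, eigs ρ k :=
  unital_iff_max_eigenvalue_nonincreasing_general Φ hpos htp
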